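/- arXiv:1807.02493 — 10 statements merged into one kernel-verified Lean document; each statement's English description precedes it below -/
import Mathlib

section
/- Let d be a derivation of the evolution algebra A(G) of a finite graph G with matrix (d_{ij}) relative to the natural basis, i.e. d(e_i) = sum_k d_{ik} e_k. If i ≠ j and N(i) ∩ N(j) ≠ ∅, then d_{ij} = -d_{ji}. -/
open Finset

theorem der_antisym_general {V : Type*} [Fintype V] [DecidableEq V]
    (G : SimpleGraph V) [DecidableRel G.Adj]
{K : Type*} [Field K]
    (d : V → V → K)
    (h1 : ∀ i j k : V, i ≠ j →
      (if G.Adj j k then (1:K) else 0) * d i j +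
      (if G.Adj i k then (1:K) else 0) * d j i = 0)
    {i j : V} (hij : i ≠ j)
    (hN : (G.neighborFinset i ∩ G.neighborFinset j).Nonempty) :
    d i j = - d j i := by
  obtain ⟨k, hk⟩ := hN
  rw [mem_inter, G.mem_neighborFinset, G.mem_neighborFinset] at hk
  simpa [hk.1, hk.2, eq_neg_iff_add_eq_zero] using h1 i j k hij

theorem der_antisym {V : Type*} [Fintype V] [DecidableEq V]
    (G : SimpleGraph V) [DecidableRel G.Adj]
{K : Type*} [Field K] [CharZero K]
    (hconn : G.Connected) (hcard : 3 ≤ Fintype.card V)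
    (d : V → V → K)
    (h1 : ∀ i j k : V, i ≠ j →
      (if G.Adj j k then (1:K) else 0) * d i j +
      (if G.Adj i k then (1:K) else 0) * d j i = 0)
    (h2 : ∀ i j : V, ∑ k, (if G.Adj i k then (1:K) else 0) * d k j =
      2 * (if G.Adj i j then (1:K) else 0) * d i i)
    {i j : V} (hij : i ≠ j)
    (hN : (G.neighborFinset i ∩ G.neighborFinset j).Nonempty) :
    d i j = - d j i :=
  der_antisym_general G d h1 hij hN
end

section
/- Let d be a derivation of the evolution algebra A(G) of a finite graph G with matrix (d_{ij}). If i ≠ j and there exists a vertex in N(i) that is not in N(j) (i.e. N(i) ∩ N(j)^c ≠ ∅), then d_{ji} = 0. -/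
open Finset

theorem der_zero_of_not_subset_general {V : Type*} [Fintype V] [DecidableEq V]
    (G : SimpleGraph V) [DecidableRel G.Adj]
{K : Type*} [Field K]
    (d : V → V → K)
    (h1 : ∀ i j k : V, i ≠ j →
      (if G.Adj j k then (1:K) else 0) * d i j +
      (if G.Adj i k then (1:K) else 0) * d j i = 0)
    {i j : V} (hij : i ≠ j)
    (hN : (G.neighborFinset i \ G.neighborFinset j).Nonempty) :
    d j i = 0 := by
  obtain ⟨k, hk⟩ := hN
  rw [mem_sdiff, SimpleGraph.mem_neighborFinset, SimpleGraph.mem_neighborFinset] at hk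
  simpa [hk.1, hk.2] using h1 i j k hij

theorem der_zero_of_not_subset {V : Type*} [Fintype V] [DecidableEq V]
    (G : SimpleGraph V) [DecidableRel G.Adj]
{K : Type*} [Field K] [CharZero K]
    (hconn : G.Connected) (hcard : 3 ≤ Fintype.card V)
    (d : V → V → K)
    (h1 : ∀ i j k : V, i ≠ j →
      (if G.Adj j k then (1:K) else 0) * d i j +
      (if G.Adj i k then (1:K) else 0) * d j i = 0)
    (h2 : ∀ i j : V, ∑ k, (if G.Adj i k then (1:K) else 0) * d k j =
      2 * (if G.Adj i j then (1:K) else 0) * d i i)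
    {i j : V} (hij : i ≠ j)
    (hN : (G.neighborFinset i \ G.neighborFinset j).Nonempty) :
    d j i = 0 :=
  der_zero_of_not_subset_general G d h1 hij hN
end

section
/- Let d be a derivation of the evolution algebra A(G) of a finite connected graph G with |V| ≥ 3 and matrix (d_{ij}). Then for every vertex i, d_{ii} = (1/(2·deg(i))) · Σ_{k ∈ N(i)} d_{kk}. -/
open Finset

/-! Summing the derivation identity `∑_{k ∈ N(i)} d_{kj} = 2 a_{ij} d_{ii}` over `j ∈ N(i)` gives
`2 deg(i) d_{ii}` for the full sum `∑_{j,k ∈ N(i)} d_{kj}`. Any two distinct neighbours `j, k` of `i`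
have `i` as a common neighbour, so the first family of derivation equations makes `d` antisymmetric
on `N(i)`: the off-diagonal part of the sum cancels and only `∑_{k ∈ N(i)} d_{kk}` remains.
Connectedness makes `deg(i) > 0`, so one may divide. -/

theorem Finset.sum_sum_eq_sum_diag_of_antisymm {α M : Type*} [DecidableEq α] [AddCommGroup M]
    {s : Finset α} {f : α → α → M} (hf : ∀ j ∈ s, ∀ k ∈ s, j ≠ k → f j k = -f k j) :
    ∑ j ∈ s, ∑ k ∈ s, f j k = ∑ j ∈ s, f j j := by
  have hoff : ∑ p ∈ s.offDiag, f p.1 p.2 = 0 := by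
    refine sum_involution (fun p _ => p.swap) (fun p hp => ?_) (fun p hp _ => ?_)
      (fun p hp => mem_offDiag.2 ?_) (fun p _ => p.swap_swap)
    all_goals obtain ⟨hp₁, hp₂, hne⟩ := mem_offDiag.1 hp
    · rw [hf _ hp₁ _ hp₂ hne, Prod.fst_swap, Prod.snd_swap, neg_add_cancel]
    · exact fun h => hne (congrArg Prod.snd h)
    · exact ⟨hp₂, hp₁, hne.symm⟩
  rw [← sum_product', ← diag_union_offDiag, sum_union (disjoint_diag_offDiag s), sum_diag, hoff,
    add_zero]

namespace SimpleGraph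

variable {V K : Type*} (G : SimpleGraph V)

theorem sum_ite_adj_mul [Fintype V] [DecidableRel G.Adj] [NonAssocSemiring K] (i : V) (f : V → K) :
    ∑ k, (if G.Adj i k then (1 : K) else 0) * f k = ∑ k ∈ G.neighborFinset i, f k := by
  simp only [boole_mul, ← sum_filter, neighborFinset_eq_filter]

theorem antisymm_of_adj_of_adj [DecidableRel G.Adj] [Ring K] {d : V → V → K}
    (h1 : ∀ i j k : V, i ≠ j →
      (if G.Adj j k then (1:K) else 0) * d i j +
      (if G.Adj i k then (1:K) else 0) * d j i = 0)
    {i j k : V} (hj : G.Adj j i) (hk : G.Adj k i) (hjk : j ≠ k) : d j k = -d k j := by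
  have h := h1 j k i hjk
  rw [if_pos hk, if_pos hj, one_mul, one_mul] at h
  exact eq_neg_of_add_eq_zero_left h

end SimpleGraph

theorem der_diag_avg {V : Type*} [Fintype V] [DecidableEq V]
    (G : SimpleGraph V) [DecidableRel G.Adj]
{K : Type*} [Field K] [CharZero K]
    (hconn : G.Connected) (hcard : 3 ≤ Fintype.card V)
    (d : V → V → K)
    (h1 : ∀ i j k : V, i ≠ j →
      (if G.Adj j k then (1:K) else 0) * d i j +
      (if G.Adj i k then (1:K) else 0) * d j i = 0)
    (h2 : ∀ i j : V, ∑ k, (if G.Adj i k then (1:K) else 0) * d k j =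
      2 * (if G.Adj i j then (1:K) else 0) * d i i)
    (i : V) :
    d i i = (1 / (2 * (G.degree i : K))) * ∑ k ∈ G.neighborFinset i, d k k := by
  have hdeg : (G.degree i : K) ≠ 0 := by
    have : Nontrivial V := Fintype.one_lt_card_iff_nontrivial.mp (by omega)
    exact Nat.cast_ne_zero.mpr (hconn.preconnected.degree_pos_of_nontrivial i).ne'
  have hrow : ∀ j ∈ G.neighborFinset i, ∑ k ∈ G.neighborFinset i, d k j = 2 * d i i := by
    intro j hj
    rw [← G.sum_ite_adj_mul, h2, if_pos ((G.mem_neighborFinset i j).1 hj), mul_one]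
  have hsum : 2 * (G.degree i : K) * d i i = ∑ k ∈ G.neighborFinset i, d k k := calc
    2 * (G.degree i : K) * d i i
        = ∑ j ∈ G.neighborFinset i, ∑ k ∈ G.neighborFinset i, d k j := by
      rw [sum_congr rfl hrow, sum_const, G.card_neighborFinset_eq_degree, nsmul_eq_mul]
      ring
    _ = ∑ k ∈ G.neighborFinset i, d k k := by
      rw [sum_comm]
      refine sum_sum_eq_sum_diag_of_antisymm fun j hj k hk hjk => ?_
      rw [SimpleGraph.mem_neighborFinset] at hj hk
      exact G.antisymm_of_adj_of_adj h1 hj.symm hk.symm hjk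
  rw [← hsum]
  field_simp
end

section
/- Let d be a derivation of the evolution algebra A(G) of a finite connected graph G with |V| ≥ 3 and matrix (d_{ij}). If vertices i and j are twins (N(i) = N(j)), then d_{ii} = d_{jj}. -/
/-! Twins have the same row of the adjacency matrix, so the identity
`Σ_k a_{ik} d_{ky} = 2 a_{iy} d_{ii}` taken at a common neighbour `y` of `i` and `j` gives
`2 d_{ii} = 2 d_{jj}`; connectivity supplies `y` once `i ≠ j`. -/

namespace SimpleGraph

variable {V : Type*} {G : SimpleGraph V}

lemma adj_iff_adj_of_neighborFinset_eq {i j : V} [Fintype (G.neighborSet i)]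
    [Fintype (G.neighborSet j)] (htwin : G.neighborFinset i = G.neighborFinset j) (k : V) :
    G.Adj i k ↔ G.Adj j k := by
  rw [← mem_neighborFinset, htwin, mem_neighborFinset]

lemma Connected.exists_adj_of_ne (hconn : G.Connected) {i j : V} (hij : i ≠ j) :
    ∃ y, G.Adj i y :=
  have : Nontrivial V := nontrivial_of_ne i j hij
  G.exists_adj_iff_not_isIsolated.2 (hconn.preconnected.not_isIsolated i)

lemma diag_eq_of_adj_iff_adj [Fintype V] [DecidableRel G.Adj] {K : Type*} [Field K]
    [CharZero K] {d : V → V → K}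
    (h2 : ∀ i j : V, ∑ k, (if G.Adj i k then (1:K) else 0) * d k j =
      2 * (if G.Adj i j then (1:K) else 0) * d i i)
    {i j y : V} (htwin : ∀ k, G.Adj i k ↔ G.Adj j k) (hy : G.Adj i y) :
    d i i = d j j := by
  have hrow : ∑ k, (if G.Adj i k then (1:K) else 0) * d k y =
      ∑ k, (if G.Adj j k then (1:K) else 0) * d k y := by
    simp only [htwin]
  rw [h2, h2, if_pos hy, if_pos ((htwin y).1 hy)] at hrow
  simpa using hrow

end SimpleGraph

theorem der_diag_eq_of_twin_general {V : Type*} [Fintype V]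
    (G : SimpleGraph V) [DecidableRel G.Adj]
{K : Type*} [Field K] [CharZero K]
    (hconn : G.Connected)
    (d : V → V → K)
    (h2 : ∀ i j : V, ∑ k, (if G.Adj i k then (1:K) else 0) * d k j =
      2 * (if G.Adj i j then (1:K) else 0) * d i i)
    {i j : V} (htwin : G.neighborFinset i = G.neighborFinset j) :
    d i i = d j j := by
  rcases eq_or_ne i j with rfl | hij
  · rfl
  obtain ⟨y, hy⟩ := hconn.exists_adj_of_ne hij
  exact SimpleGraph.diag_eq_of_adj_iff_adj h2
    (SimpleGraph.adj_iff_adj_of_neighborFinset_eq htwin) hy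

theorem der_diag_eq_of_twin {V : Type*} [Fintype V] [DecidableEq V]
    (G : SimpleGraph V) [DecidableRel G.Adj]
{K : Type*} [Field K] [CharZero K]
    (hconn : G.Connected) (hcard : 3 ≤ Fintype.card V)
    (d : V → V → K)
    (h1 : ∀ i j k : V, i ≠ j →
      (if G.Adj j k then (1:K) else 0) * d i j +
      (if G.Adj i k then (1:K) else 0) * d j i = 0)
    (h2 : ∀ i j : V, ∑ k, (if G.Adj i k then (1:K) else 0) * d k j =
      2 * (if G.Adj i j then (1:K) else 0) * d i i)
    {i j : V} (htwin : G.neighborFinset i = G.neighborFinset j) :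
    d i i = d j j :=
  der_diag_eq_of_twin_general G hconn d h2 htwin
end

section
/- Let d be a derivation of the evolution algebra A(G) of a finite connected graph G with |V| ≥ 3, with matrix (d_{ij}). If d_{ij} = d_{ji} = 0 for all pairs of distinct vertices i ≠ j, then also d_{ii} = 0 for every vertex i; that is, d = 0. -/
open Finset

theorem diag_eq_two_mul_diag_of_adj {V K : Type*} [Fintype V] (G : SimpleGraph V)
    [DecidableRel G.Adj] [Semiring K] (d : V → V → K) {i j : V}
    (hder : ∑ k, (if G.Adj i k then (1:K) else 0) * d k j =
      2 * (if G.Adj i j then (1:K) else 0) * d i i)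
    (hcol : ∀ k, k ≠ j → d k j = 0) (hij : G.Adj i j) :
    d j j = 2 * d i i := by
  rw [sum_eq_single j (fun k _ hk => by simp [hcol k hk]) (by simp)] at hder
  simpa [hij] using hder

theorem der_zero_of_offdiag_zero_general {V : Type*} [Fintype V]
    (G : SimpleGraph V) [DecidableRel G.Adj]
{K : Type*} [Field K] [CharZero K]
    (hconn : G.Connected) (hcard : 3 ≤ Fintype.card V)
    (d : V → V → K)
    (h2 : ∀ i j : V, ∑ k, (if G.Adj i k then (1:K) else 0) * d k j =
      2 * (if G.Adj i j then (1:K) else 0) * d i i)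
    (hoff : ∀ i j : V, i ≠ j → d i j = 0) :
    ∀ i j : V, d i j = 0 := by
  intro i j
  rcases eq_or_ne i j with rfl | hij
  · have : Nontrivial V := Fintype.one_lt_card_iff_nontrivial.mp (by omega)
    obtain ⟨j, hij⟩ := hconn.preconnected.exists_adj_of_nontrivial i
    -- along the edge `i ~ j` the diagonal doubles both ways, so `d i i = 4 * d i i`
    have hj := diag_eq_two_mul_diag_of_adj G d (h2 i j) (fun k hk => hoff k j hk) hij
    have hi := diag_eq_two_mul_diag_of_adj G d (h2 j i) (fun k hk => hoff k i hk) hij.symm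
    have h3 : (3 : K) * d i i = 0 := by linear_combination -hi - 2 * hj
    simpa using h3
  · exact hoff i j hij

theorem der_zero_of_offdiag_zero {V : Type*} [Fintype V] [DecidableEq V]
    (G : SimpleGraph V) [DecidableRel G.Adj]
{K : Type*} [Field K] [CharZero K]
    (hconn : G.Connected) (hcard : 3 ≤ Fintype.card V)
    (d : V → V → K)
    (h1 : ∀ i j k : V, i ≠ j →
      (if G.Adj j k then (1:K) else 0) * d i j +
      (if G.Adj i k then (1:K) else 0) * d j i = 0)
    (h2 : ∀ i j : V, ∑ k, (if G.Adj i k then (1:K) else 0) * d k j =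
      2 * (if G.Adj i j then (1:K) else 0) * d i i)
    (hoff : ∀ i j : V, i ≠ j → d i j = 0) :
    ∀ i j : V, d i j = 0 :=
  der_zero_of_offdiag_zero_general G hconn hcard d h2 hoff
end

section
/- Let d be a derivation of the evolution algebra A(G) of a finite connected graph G with |V| ≥ 3, with matrix (d_{ij}). If d_{ij} ≠ 0 for some pair of distinct vertices i ≠ j, then i and j are twins, i.e. N(i) = N(j). -/
/-!
Read at a vertex `k`, the off-diagonal derivation identity says
`a_{jk} d_{ij} + a_{ik} d_{ji} = 0`. If `d_{ij} ≠ 0`, a neighbour `k` of `j` that is not a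
neighbour of `i` would force `d_{ij} = 0`, so `N(j) ⊆ N(i)`. Connectedness gives `j` a
neighbour `k`, which is then common to `i` and `j`, so `d_{ij} + d_{ji} = 0` and `d_{ji} ≠ 0`;
the same argument with `i` and `j` exchanged gives `N(i) ⊆ N(j)`.
-/

namespace SimpleGraph

variable {V : Type*} {G : SimpleGraph V} [DecidableRel G.Adj] {K : Type*} [Semiring K]
  {d : V → V → K} {i j : V}

theorem adj_of_adj_of_ne_zero
    (hder : ∀ k, (if G.Adj j k then (1:K) else 0) * d i j +
      (if G.Adj i k then (1:K) else 0) * d j i = 0)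
    (hd : d i j ≠ 0) {k : V} (hjk : G.Adj j k) : G.Adj i k := by
  by_contra hik
  exact hd (by simpa [hjk, hik] using hder k)

theorem ne_zero_swap_of_adj_of_adj
    (hder : ∀ k, (if G.Adj j k then (1:K) else 0) * d i j +
      (if G.Adj i k then (1:K) else 0) * d j i = 0)
    (hd : d i j ≠ 0) {k : V} (hik : G.Adj i k) (hjk : G.Adj j k) : d j i ≠ 0 := by
  intro hji
  exact hd (by simpa [hik, hjk, hji] using hder k)

end SimpleGraph

theorem twin_of_der_ne_zero_general {V : Type*} [Fintype V]
    (G : SimpleGraph V) [DecidableRel G.Adj]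
{K : Type*} [Field K]
    (hconn : G.Connected)
    (d : V → V → K)
    (h1 : ∀ i j k : V, i ≠ j →
      (if G.Adj j k then (1:K) else 0) * d i j +
      (if G.Adj i k then (1:K) else 0) * d j i = 0)
    {i j : V} (hij : i ≠ j) (hd : d i j ≠ 0) :
    G.neighborFinset i = G.neighborFinset j := by
  have : Nontrivial V := nontrivial_of_ne i j hij
  have hsub : ∀ k, G.Adj j k → G.Adj i k :=
    fun _ => SimpleGraph.adj_of_adj_of_ne_zero (h1 i j · hij) hd
  obtain ⟨k, hjk⟩ := hconn.preconnected.exists_adj_of_nontrivial j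
  have hd' : d j i ≠ 0 :=
    SimpleGraph.ne_zero_swap_of_adj_of_adj (h1 i j · hij) hd (hsub k hjk) hjk
  have hsup : ∀ k, G.Adj i k → G.Adj j k :=
    fun _ => SimpleGraph.adj_of_adj_of_ne_zero (h1 j i · hij.symm) hd'
  ext k
  simpa only [SimpleGraph.mem_neighborFinset] using ⟨hsup k, hsub k⟩

theorem twin_of_der_ne_zero {V : Type*} [Fintype V] [DecidableEq V]
    (G : SimpleGraph V) [DecidableRel G.Adj]
{K : Type*} [Field K] [CharZero K]
    (hconn : G.Connected) (hcard : 3 ≤ Fintype.card V)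
    (d : V → V → K)
    (h1 : ∀ i j k : V, i ≠ j →
      (if G.Adj j k then (1:K) else 0) * d i j +
      (if G.Adj i k then (1:K) else 0) * d j i = 0)
    (h2 : ∀ i j : V, ∑ k, (if G.Adj i k then (1:K) else 0) * d k j =
      2 * (if G.Adj i j then (1:K) else 0) * d i i)
    {i j : V} (hij : i ≠ j) (hd : d i j ≠ 0) :
    G.neighborFinset i = G.neighborFinset j :=
  twin_of_der_ne_zero_general G hconn d h1 hij hd
end

section
/- Let G be a finite connected graph with |V| ≥ 3 and let d be a derivation of the evolution algebra A(G) with matrix (d_{ij}). If d_{kℓ} ≠ 0 for some distinct vertices k ≠ ℓ, then there exists a twin class T ⊆ V with |T| ≥ 3 such that k, ℓ ∈ T. -/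
/-!
If `d i j ≠ 0` for `i ≠ j`, the equation `a_{jm} d_{ij} + a_{im} d_{ji} = 0` at a neighbour `m` of
`j` forces `d j i = -d i j`, and then at every `m` it forces `a_{im} = a_{jm}`: `i` and `j` are
twins. So column `t` of `d` is supported on the twin class of `t`. If the twin class of `k` were
`{k, l}`, the column equations at a common neighbour `p` would give
`d k k + d l k = 2 d p p = d k l + d l l`, while the equal rows `k`, `l` of the adjacency matrix
give `d k k = d l l`; together with `d l k = -d k l` this yields `2 d k l = 0`.
-/

open Finset

namespace SimpleGraph

variable {V : Type*} [Fintype V] [DecidableEq V] (G : SimpleGraph V) [DecidableRel G.Adj]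

def twinClass (i : V) : Finset V :=
  univ.filter fun j => G.neighborFinset j = G.neighborFinset i

variable {G}

@[simp]
lemma mem_twinClass {i j : V} : j ∈ G.twinClass i ↔ G.neighborFinset j = G.neighborFinset i := by
  simp [twinClass]

lemma twinClass_eq_of_neighborFinset_eq {i j : V} (h : G.neighborFinset i = G.neighborFinset j) :
    G.twinClass i = G.twinClass j := by
  simp [twinClass, h]

lemma adj_of_mem_twinClass {p t m : V} (hm : m ∈ G.twinClass t) (hp : G.Adj p t) : G.Adj p m := by
  rw [adj_comm, ← mem_neighborFinset, mem_twinClass.1 hm, mem_neighborFinset, adj_comm]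
  exact hp

end SimpleGraph

open SimpleGraph

section Derivation

variable {V : Type*} [Fintype V] {K : Type*} [CommRing K]

/-- `d` is the matrix, in the natural basis, of a derivation of the evolution algebra `A(G)`. -/
structure IsEvolutionDerivation (G : SimpleGraph V) [DecidableRel G.Adj] (d : V → V → K) :
    Prop where
  off_diag : ∀ i j k : V, i ≠ j → G.adjMatrix K j k * d i j + G.adjMatrix K i k * d j i = 0
  diag : ∀ i j : V, ∑ k, G.adjMatrix K i k * d k j = 2 * G.adjMatrix K i j * d i i

namespace IsEvolutionDerivation

variable {G : SimpleGraph V} [DecidableRel G.Adj] {d : V → V → K}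

lemma adj_and_apply_swap_eq_neg (hd : IsEvolutionDerivation G d) {i j m : V} (hij : i ≠ j)
    (hdij : d i j ≠ 0) (hjm : G.Adj j m) : G.Adj i m ∧ d j i = -d i j := by
  have h := hd.off_diag i j m hij
  simp only [adjMatrix_apply, if_pos hjm, one_mul] at h
  by_cases him : G.Adj i m
  · simp only [if_pos him, one_mul] at h
    exact ⟨him, by linear_combination h⟩
  · simp only [if_neg him, zero_mul, add_zero] at h
    exact absurd h hdij

lemma neighborFinset_eq_of_apply_ne_zero (hd : IsEvolutionDerivation G d)
    (hG : ∀ v, ∃ w, G.Adj v w) {i j : V} (hij : i ≠ j) (hdij : d i j ≠ 0) :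
    G.neighborFinset i = G.neighborFinset j := by
  obtain ⟨m₀, hjm₀⟩ := hG j
  have hdji : d j i ≠ 0 := by
    rw [(hd.adj_and_apply_swap_eq_neg hij hdij hjm₀).2, neg_ne_zero]
    exact hdij
  ext m
  simp only [mem_neighborFinset]
  exact ⟨fun him => (hd.adj_and_apply_swap_eq_neg hij.symm hdji him).1,
    fun hjm => (hd.adj_and_apply_swap_eq_neg hij hdij hjm).1⟩

lemma apply_eq_zero_of_notMem_twinClass [DecidableEq V] (hd : IsEvolutionDerivation G d)
    (hG : ∀ v, ∃ w, G.Adj v w) {m t : V} (hm : m ∉ G.twinClass t) : d m t = 0 := by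
  by_contra h
  have hmt : m ≠ t := by
    rintro rfl
    simp at hm
  exact hm (mem_twinClass.2 (hd.neighborFinset_eq_of_apply_ne_zero hG hmt h))

lemma sum_twinClass_apply [DecidableEq V] (hd : IsEvolutionDerivation G d)
    (hG : ∀ v, ∃ w, G.Adj v w) {p t : V} (hpt : G.Adj p t) :
    ∑ m ∈ G.twinClass t, d m t = 2 * d p p :=
  calc ∑ m ∈ G.twinClass t, d m t
      = ∑ m ∈ G.twinClass t, G.adjMatrix K p m * d m t :=
        sum_congr rfl fun m hm => by
          rw [adjMatrix_apply, if_pos (adj_of_mem_twinClass hm hpt), one_mul]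
    _ = ∑ m, G.adjMatrix K p m * d m t :=
        sum_subset (subset_univ _) fun m _ hm => by
          rw [hd.apply_eq_zero_of_notMem_twinClass hG hm, mul_zero]
    _ = 2 * d p p := by rw [hd.diag, adjMatrix_apply, if_pos hpt, mul_one]

variable [NoZeroDivisors K] [CharZero K]

lemma apply_self_eq_of_neighborFinset_eq (hd : IsEvolutionDerivation G d) {k l p : V}
    (hkl : G.neighborFinset k = G.neighborFinset l) (hkp : G.Adj k p) : d k k = d l l := by
  have hadj : ∀ m, G.Adj k m ↔ G.Adj l m := fun m => by
    rw [← mem_neighborFinset, hkl, mem_neighborFinset]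
  have hrow : G.adjMatrix K k = G.adjMatrix K l := by
    ext m
    simp only [adjMatrix_apply, hadj]
  have h := hd.diag k p
  rw [hrow, hd.diag l p, adjMatrix_apply, if_pos ((hadj p).1 hkp)] at h
  exact mul_left_cancel₀ two_ne_zero (by linear_combination -h)

lemma three_le_card_twinClass [DecidableEq V] (hd : IsEvolutionDerivation G d)
    (hG : ∀ v, ∃ w, G.Adj v w) {k l : V} (hkl : k ≠ l) (hdkl : d k l ≠ 0) :
    3 ≤ (G.twinClass k).card := by
  have hN := hd.neighborFinset_eq_of_apply_ne_zero hG hkl hdkl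
  obtain ⟨p, hlp⟩ := hG l
  obtain ⟨hkp, hanti⟩ := hd.adj_and_apply_swap_eq_neg hkl hdkl hlp
  by_contra! hcard
  have hTk : G.twinClass k = {k, l} := by
    refine (eq_of_subset_of_card_le (fun x hx => ?_) (by rw [card_pair hkl]; omega)).symm
    rcases mem_insert.1 hx with rfl | hx
    · simp
    · rw [mem_singleton.1 hx, mem_twinClass, hN]
  have hTl : G.twinClass l = {k, l} := (twinClass_eq_of_neighborFinset_eq hN.symm).trans hTk
  have e1 := hd.sum_twinClass_apply hG hkp.symm
  have e2 := hd.sum_twinClass_apply hG hlp.symm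
  rw [hTk, sum_pair hkl] at e1
  rw [hTl, sum_pair hkl] at e2
  have e3 := hd.apply_self_eq_of_neighborFinset_eq hN hkp
  have h2 : 2 * d k l = 0 := by linear_combination e2 - e1 + e3 + hanti
  exact hdkl ((mul_eq_zero.1 h2).resolve_left two_ne_zero)

end IsEvolutionDerivation

end Derivation

theorem twin_class_three_of_der_ne_zero_general {V : Type*} [Fintype V] [DecidableEq V]
    (G : SimpleGraph V) [DecidableRel G.Adj]
{K : Type*} [Field K] [CharZero K]
    (hconn : G.Connected)
    (d : V → V → K)
    (h1 : ∀ i j k : V, i ≠ j →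
      (if G.Adj j k then (1:K) else 0) * d i j +
      (if G.Adj i k then (1:K) else 0) * d j i = 0)
    (h2 : ∀ i j : V, ∑ k, (if G.Adj i k then (1:K) else 0) * d k j =
      2 * (if G.Adj i j then (1:K) else 0) * d i i)
    {k l : V} (hkl : k ≠ l) (hd : d k l ≠ 0) :
    ∃ T : Finset V, (∃ i₀ : V, T =
        Finset.univ.filter fun j => G.neighborFinset j = G.neighborFinset i₀) ∧
      3 ≤ T.card ∧ k ∈ T ∧ l ∈ T := by
  have hder : IsEvolutionDerivation G d := ⟨h1, h2⟩
  have : Nontrivial V := ⟨⟨k, l, hkl⟩⟩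
  have hG : ∀ v, ∃ w, G.Adj v w := hconn.preconnected.exists_adj_of_nontrivial
  refine ⟨G.twinClass k, ⟨k, rfl⟩, hder.three_le_card_twinClass hG hkl hd, by simp, ?_⟩
  exact mem_twinClass.2 (hder.neighborFinset_eq_of_apply_ne_zero hG hkl hd).symm

theorem twin_class_three_of_der_ne_zero {V : Type*} [Fintype V] [DecidableEq V]
    (G : SimpleGraph V) [DecidableRel G.Adj]
{K : Type*} [Field K] [CharZero K]
    (hconn : G.Connected) (hcard : 3 ≤ Fintype.card V)
    (d : V → V → K)
    (h1 : ∀ i j k : V, i ≠ j →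
      (if G.Adj j k then (1:K) else 0) * d i j +
      (if G.Adj i k then (1:K) else 0) * d j i = 0)
    (h2 : ∀ i j : V, ∑ k, (if G.Adj i k then (1:K) else 0) * d k j =
      2 * (if G.Adj i j then (1:K) else 0) * d i i)
    {k l : V} (hkl : k ≠ l) (hd : d k l ≠ 0) :
    ∃ T : Finset V, (∃ i₀ : V, T =
        Finset.univ.filter fun j => G.neighborFinset j = G.neighborFinset i₀) ∧
      3 ≤ T.card ∧ k ∈ T ∧ l ∈ T :=
  twin_class_three_of_der_ne_zero_general G hconn d h1 h2 hkl hd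
end

section
/- Let G be a finite connected graph with |V| ≥ 3, let T ⊆ V be a twin class of G, and let d be a derivation of the evolution algebra A(G) with matrix (d_{ij}). Then d_{ik} = d_{ki} = 0 for every i ∈ T and every k ∉ T. -/
/-!
Fix `i` in the twin class and `k` outside it, so `N(i) ≠ N(k)`; by symmetry some `u` is adjacent
to `i` but not to `k`. The off-diagonal derivation identity at the triple `(k, i, u)` gives
`d k i = 0`. Since `G` is connected with at least two vertices, `k` has a neighbour `w`, and the
identity at `(i, k, w)` reads either `d i k = 0` or `d i k + d k i = 0`; both give `d i k = 0`.
-/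

open Finset

namespace SimpleGraph

variable {V K : Type*} [NonAssocSemiring K]

/-- The coefficient of `e_k` in `d(e_i) e_j + e_i d(e_j) = d(e_i e_j) = 0` for `i ≠ j`. -/
def IsOffDiagDerivation (G : SimpleGraph V) [DecidableRel G.Adj] (d : V → V → K) : Prop :=
  ∀ i j k : V, i ≠ j →
    (if G.Adj j k then (1:K) else 0) * d i j + (if G.Adj i k then (1:K) else 0) * d j i = 0

namespace IsOffDiagDerivation

variable {G : SimpleGraph V} [DecidableRel G.Adj] {d : V → V → K} {i k u : V}

theorem apply_eq_zero (hd : IsOffDiagDerivation G d) (hik : i ≠ k) (hku : G.Adj k u)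
    (hiu : ¬G.Adj i u) : d i k = 0 := by
  simpa [hku, hiu] using hd i k u hik

theorem apply_add_apply_swap_eq_zero (hd : IsOffDiagDerivation G d) (hik : i ≠ k)
    (hiu : G.Adj i u) (hku : G.Adj k u) : d i k + d k i = 0 := by
  simpa [hiu, hku] using hd i k u hik

theorem apply_eq_zero_and_apply_swap_eq_zero (hd : IsOffDiagDerivation G d) (hik : i ≠ k)
    (hiu : G.Adj i u) (hku : ¬G.Adj k u) {w : V} (hkw : G.Adj k w) :
    d i k = 0 ∧ d k i = 0 := by
  have hki : d k i = 0 := hd.apply_eq_zero hik.symm hiu hku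
  refine ⟨?_, hki⟩
  by_cases hiw : G.Adj i w
  · simpa [hki] using hd.apply_add_apply_swap_eq_zero hik hiw hkw
  · exact hd.apply_eq_zero hik hkw hiw

theorem apply_eq_zero_and_apply_swap_eq_zero_of_neighborSet_ne (hd : IsOffDiagDerivation G d)
    (hG : ∀ v, ∃ w, G.Adj v w) (hne : G.neighborSet i ≠ G.neighborSet k) :
    d i k = 0 ∧ d k i = 0 := by
  have hik : i ≠ k := fun h => hne (h ▸ rfl)
  obtain ⟨u, hu⟩ : ∃ u, ¬(G.Adj i u ↔ G.Adj k u) := by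
    by_contra! h
    exact hne (Set.ext h)
  by_cases hiu : G.Adj i u
  · obtain ⟨w, hkw⟩ := hG k
    exact hd.apply_eq_zero_and_apply_swap_eq_zero hik hiu (by tauto) hkw
  · obtain ⟨w, hiw⟩ := hG i
    exact (hd.apply_eq_zero_and_apply_swap_eq_zero hik.symm (by tauto) hiu hiw).symm

end IsOffDiagDerivation

end SimpleGraph

theorem der_vanishes_outside_twin_class_general {V : Type*} [Fintype V] [DecidableEq V]
    (G : SimpleGraph V) [DecidableRel G.Adj]
{K : Type*} [Field K]
    (hconn : G.Connected) (hcard : 3 ≤ Fintype.card V)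
    (d : V → V → K)
    (h1 : ∀ i j k : V, i ≠ j →
      (if G.Adj j k then (1:K) else 0) * d i j +
      (if G.Adj i k then (1:K) else 0) * d j i = 0)
    (i₀ : V) (T : Finset V)
    (hT : T = Finset.univ.filter fun j => G.neighborFinset j = G.neighborFinset i₀) :
    ∀ i ∈ T, ∀ k ∉ T, d i k = 0 ∧ d k i = 0 := by
  have : Nontrivial V := Fintype.one_lt_card_iff_nontrivial.mp (by omega)
  subst hT
  intro i hi k hk
  simp only [mem_filter, mem_univ, true_and] at hi hk
  refine SimpleGraph.IsOffDiagDerivation.apply_eq_zero_and_apply_swap_eq_zero_of_neighborSet_ne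
    h1 hconn.preconnected.exists_adj_of_nontrivial fun h => hk ?_
  rw [← hi, ← Finset.coe_inj, SimpleGraph.coe_neighborFinset, SimpleGraph.coe_neighborFinset, h]

theorem der_vanishes_outside_twin_class {V : Type*} [Fintype V] [DecidableEq V]
    (G : SimpleGraph V) [DecidableRel G.Adj]
{K : Type*} [Field K] [CharZero K]
    (hconn : G.Connected) (hcard : 3 ≤ Fintype.card V)
    (d : V → V → K)
    (h1 : ∀ i j k : V, i ≠ j →
      (if G.Adj j k then (1:K) else 0) * d i j +
      (if G.Adj i k then (1:K) else 0) * d j i = 0)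
    (h2 : ∀ i j : V, ∑ k, (if G.Adj i k then (1:K) else 0) * d k j =
      2 * (if G.Adj i j then (1:K) else 0) * d i i)
    (i₀ : V) (T : Finset V)
    (hT : T = Finset.univ.filter fun j => G.neighborFinset j = G.neighborFinset i₀) :
    ∀ i ∈ T, ∀ k ∉ T, d i k = 0 ∧ d k i = 0 :=
  der_vanishes_outside_twin_class_general G hconn hcard d h1 i₀ T hT
end

section
/- Let G be a finite connected graph with |V| ≥ 3 such that every twin class of G has at most two vertices. Then the only derivation of the evolution algebra A(G) is the zero map. -/
/-!
Write `D i j` for the `e_j`-coordinate of `d e_i`. Applying `d` to `e_i e_j = 0` (`i ≠ j`) gives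
`D i j [j ∼ k] + D j i [i ∼ k] = 0` for every `k`: so `D j i = 0` unless `i` and `j` are twins,
and `D i j + D j i = 0` for twins. Applying `d` to `e_i e_i = ∑_{m ∼ i} e_m` gives
`∑_{m ∼ i} D m k = 2 D i i` for `k ∼ i`, and only the twins of `k` contribute to this sum.
Comparing these sums shows that `D i i = D j j` whenever `i` and `j` have a common neighbour,
and, for a twin class `{k, k'}`, that `D k k' = D k' k`, hence `D k k' = 0`.
Once `d` is diagonal the sum relation reads `D k k = 2 D i i` for adjacent `i`, `k`,
so `D i i = 4 D i i`, which forces `D = 0` away from characteristics 2 and 3.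
-/
open Finset

/-- Multiplication of the evolution algebra `A(G)` of a graph `G`, realized on
coordinates with respect to the natural basis: `e_i · e_i = ∑_{k ∈ N(i)} e_k`
and `e_i · e_j = 0` for `i ≠ j`. -/
def evolMul {V : Type*} [Fintype V] (G : SimpleGraph V) [DecidableRel G.Adj]
    (K : Type*) [Field K] (x y : V → K) : V → K :=
  fun k => ∑ i, x i * y i * (if G.Adj i k then 1 else 0)

section EvolMul

variable {V : Type*} [Fintype V] {G : SimpleGraph V} [DecidableRel G.Adj] {K : Type*} [Field K]

theorem evolMul_comm (x y : V → K) : evolMul G K x y = evolMul G K y x := by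
  funext k
  simp only [evolMul, mul_comm (x _)]

variable [DecidableEq V]

theorem evolMul_single_one_right_apply (x : V → K) (j k : V) :
    evolMul G K x (Pi.single j 1) k = if G.Adj j k then x j else 0 := by
  simp only [evolMul]
  rw [Finset.sum_eq_single j (fun i _ hij => by simp [hij]) (by simp)]
  simp

theorem evolMul_single_one_left_apply (y : V → K) (i k : V) :
    evolMul G K (Pi.single i 1) y k = if G.Adj i k then y i else 0 := by
  rw [evolMul_comm, evolMul_single_one_right_apply]

theorem evolMul_single_one_of_ne {i j : V} (hij : i ≠ j) :
    evolMul G K (Pi.single i 1) (Pi.single j 1) = 0 := by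
  funext k
  simp [evolMul_single_one_right_apply, hij]

theorem evolMul_single_one_self (i : V) :
    evolMul G K (Pi.single i 1) (Pi.single i 1) = ∑ m ∈ G.neighborFinset i, Pi.single m 1 := by
  funext k
  simp [evolMul_single_one_right_apply, Finset.sum_apply, Pi.single_apply]

end EvolMul

section TwinClass

variable {V : Type*} [Fintype V] [DecidableEq V]

def twinClass (G : SimpleGraph V) [DecidableRel G.Adj] (i : V) : Finset V :=
  univ.filter fun j => G.neighborFinset j = G.neighborFinset i

variable {G : SimpleGraph V} [DecidableRel G.Adj] {i j m : V}

@[simp]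
theorem mem_twinClass : j ∈ twinClass G i ↔ G.neighborFinset j = G.neighborFinset i := by
  simp [twinClass]

theorem twinClass_subset_neighborFinset (him : G.Adj i m) :
    twinClass G m ⊆ G.neighborFinset i := by
  intro k hk
  have : i ∈ G.neighborFinset k := by
    rw [mem_twinClass.mp hk, SimpleGraph.mem_neighborFinset]
    exact him.symm
  simpa [SimpleGraph.mem_neighborFinset, G.adj_comm] using this

theorem twinClass_eq_pair (hij : i ≠ j) (hN : G.neighborFinset j = G.neighborFinset i)
    (hcard : (twinClass G i).card ≤ 2) : twinClass G i = {i, j} := by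
  refine (Finset.eq_of_subset_of_card_le ?_ (by rwa [Finset.card_pair hij])).symm
  simp [Finset.insert_subset_iff, hN]

end TwinClass

section Derivation

variable {V : Type*} [Fintype V] [DecidableEq V] {G : SimpleGraph V} [DecidableRel G.Adj]
  {K : Type*} [Field K]

variable (G K) in
def IsEvolDerivation (d : (V → K) →ₗ[K] (V → K)) : Prop :=
  ∀ x y : V → K, d (evolMul G K x y) = evolMul G K (d x) y + evolMul G K x (d y)

namespace IsEvolDerivation

variable {d : (V → K) →ₗ[K] (V → K)} {i j k l m : V}

theorem ite_apply_single_add_ite_apply_single (hd : IsEvolDerivation G K d) (hij : i ≠ j)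
    (k : V) :
    ((if G.Adj j k then d (Pi.single i 1) j else 0) +
      if G.Adj i k then d (Pi.single j 1) i else 0) = 0 := by
  have h := congrFun (hd (Pi.single i 1) (Pi.single j 1)) k
  rw [evolMul_single_one_of_ne hij, map_zero, Pi.add_apply, evolMul_single_one_right_apply,
    evolMul_single_one_left_apply] at h
  exact h.symm

theorem apply_single_eq_zero_of_adj_of_not_adj (hd : IsEvolDerivation G K d) (hij : i ≠ j)
    (hik : G.Adj i k) (hjk : ¬G.Adj j k) : d (Pi.single j 1) i = 0 := by
  simpa [hik, hjk] using hd.ite_apply_single_add_ite_apply_single hij k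

theorem apply_single_add_apply_single_eq_zero (hd : IsEvolDerivation G K d) (hij : i ≠ j)
    (hik : G.Adj i k) (hjk : G.Adj j k) : d (Pi.single i 1) j + d (Pi.single j 1) i = 0 := by
  simpa [hik, hjk] using hd.ite_apply_single_add_ite_apply_single hij k

theorem apply_single_eq_zero_of_neighborFinset_ne (hd : IsEvolDerivation G K d) (hij : i ≠ j)
    (hN : G.neighborFinset i ≠ G.neighborFinset j) (hil : G.Adj i l) :
    d (Pi.single j 1) i = 0 := by
  obtain ⟨k, hk⟩ : ∃ k, ¬(G.Adj i k ↔ G.Adj j k) := by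
    by_contra! h
    exact hN (Finset.ext fun k => by simpa using h k)
  by_cases hik : G.Adj i k
  · exact hd.apply_single_eq_zero_of_adj_of_not_adj hij hik (by tauto)
  · have hji : d (Pi.single i 1) j = 0 :=
      hd.apply_single_eq_zero_of_adj_of_not_adj hij.symm (by tauto) hik
    by_cases hjl : G.Adj j l
    · simpa [hji] using hd.apply_single_add_apply_single_eq_zero hij hil hjl
    · exact hd.apply_single_eq_zero_of_adj_of_not_adj hij hil hjl

theorem sum_neighborFinset_apply_single (hd : IsEvolDerivation G K d) (hik : G.Adj i k) :
    ∑ m ∈ G.neighborFinset i, d (Pi.single m 1) k = 2 * d (Pi.single i 1) i := by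
  have h := congrFun (hd (Pi.single i 1) (Pi.single i 1)) k
  rw [evolMul_single_one_self, map_sum, Finset.sum_apply, Pi.add_apply,
    evolMul_single_one_right_apply, evolMul_single_one_left_apply] at h
  simp only [hik, if_true] at h
  rw [h, two_mul]

theorem sum_twinClass_apply_single (hd : IsEvolDerivation G K d) (him : G.Adj i m) :
    ∑ k ∈ twinClass G m, d (Pi.single k 1) m = 2 * d (Pi.single i 1) i := by
  rw [← hd.sum_neighborFinset_apply_single him]
  refine Finset.sum_subset (twinClass_subset_neighborFinset him) fun k _ hk => ?_
  rw [mem_twinClass] at hk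
  exact hd.apply_single_eq_zero_of_neighborFinset_ne (by rintro rfl; exact hk rfl)
    (Ne.symm hk) him.symm

theorem apply_single_self_eq_of_adj_of_adj (hd : IsEvolDerivation G K d) (h2 : (2 : K) ≠ 0)
    (hik : G.Adj i k) (hjk : G.Adj j k) : d (Pi.single i 1) i = d (Pi.single j 1) j := by
  have h := (hd.sum_twinClass_apply_single hik).symm.trans (hd.sum_twinClass_apply_single hjk)
  exact mul_left_cancel₀ h2 h

theorem apply_single_eq_zero_of_neighborFinset_eq (hd : IsEvolDerivation G K d)
    (h2 : (2 : K) ≠ 0) (htwin : ∀ i, (twinClass G i).card ≤ 2) (hij : i ≠ j)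
    (hN : G.neighborFinset i = G.neighborFinset j) (hik : G.Adj i k) :
    d (Pi.single j 1) i = 0 := by
  have hjk : G.Adj j k := by
    simpa [hN] using (G.mem_neighborFinset i k).mpr hik
  have hi := hd.sum_twinClass_apply_single hik.symm
  have hj := hd.sum_twinClass_apply_single hjk.symm
  rw [twinClass_eq_pair hij hN.symm (htwin i), Finset.sum_pair hij] at hi
  rw [twinClass_eq_pair hij.symm hN (htwin j), Finset.sum_pair hij.symm] at hj
  have hdiag := hd.apply_single_self_eq_of_adj_of_adj h2 hik hjk
  have hanti := hd.apply_single_add_apply_single_eq_zero hij hik hjk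
  have : (2 : K) * d (Pi.single j 1) i = 0 := by linear_combination hi - hj + hanti - hdiag
  exact (mul_eq_zero.mp this).resolve_left h2

theorem apply_single_eq_zero_of_ne (hd : IsEvolDerivation G K d) (h2 : (2 : K) ≠ 0)
    (hadj : ∀ v, ∃ w, G.Adj v w) (htwin : ∀ i, (twinClass G i).card ≤ 2) (hij : i ≠ j) :
    d (Pi.single j 1) i = 0 := by
  obtain ⟨k, hik⟩ := hadj i
  by_cases hN : G.neighborFinset i = G.neighborFinset j
  · exact hd.apply_single_eq_zero_of_neighborFinset_eq h2 htwin hij hN hik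
  · exact hd.apply_single_eq_zero_of_neighborFinset_ne hij hN hik

theorem apply_single_self_eq_zero (hd : IsEvolDerivation G K d) (h2 : (2 : K) ≠ 0)
    (h3 : (3 : K) ≠ 0) (hadj : ∀ v, ∃ w, G.Adj v w)
    (htwin : ∀ i, (twinClass G i).card ≤ 2) (i : V) : d (Pi.single i 1) i = 0 := by
  have sum_twinClass_eq (m : V) :
      ∑ k ∈ twinClass G m, d (Pi.single k 1) m = d (Pi.single m 1) m :=
    Finset.sum_eq_single_of_mem m (by simp) fun k _ hkm =>
      hd.apply_single_eq_zero_of_ne h2 hadj htwin hkm.symm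
  obtain ⟨m, him⟩ := hadj i
  have hm := hd.sum_twinClass_apply_single him
  have hi := hd.sum_twinClass_apply_single him.symm
  rw [sum_twinClass_eq] at hm hi
  have : (3 : K) * d (Pi.single i 1) i = 0 := by linear_combination -hi - 2 * hm
  exact (mul_eq_zero.mp this).resolve_left h3

theorem eq_zero (hd : IsEvolDerivation G K d) (h2 : (2 : K) ≠ 0) (h3 : (3 : K) ≠ 0)
    (hadj : ∀ v, ∃ w, G.Adj v w) (htwin : ∀ i, (twinClass G i).card ≤ 2) : d = 0 := by
  refine (Pi.basisFun K V).ext fun j => funext fun i => ?_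
  rw [Pi.basisFun_apply, LinearMap.zero_apply, Pi.zero_apply]
  rcases eq_or_ne i j with rfl | hij
  · exact hd.apply_single_self_eq_zero h2 h3 hadj htwin i
  · exact hd.apply_single_eq_zero_of_ne h2 hadj htwin hij

end IsEvolDerivation

end Derivation

/-- If every twin class of a finite connected graph `G` with at least three
vertices has at most two elements, then the only derivation of `A(G)` is zero. -/
theorem der_eq_zero_of_no_large_twin_class {V : Type*} [Fintype V] [DecidableEq V]
    (G : SimpleGraph V) [DecidableRel G.Adj]
    {K : Type*} [Field K] [CharZero K]
    (hconn : G.Connected) (hcard : 3 ≤ Fintype.card V)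
    (htwin : ∀ i : V,
      (Finset.univ.filter fun j => G.neighborFinset j = G.neighborFinset i).card ≤ 2)
    (d : (V → K) →ₗ[K] (V → K))
    (hd : ∀ x y : V → K,
      d (evolMul G K x y) = evolMul G K (d x) y + evolMul G K x (d y)) :
    d = 0 := by
  have : Nontrivial V := Fintype.one_lt_card_iff_nontrivial.mp (by omega)
  exact IsEvolDerivation.eq_zero hd two_ne_zero three_ne_zero
    hconn.preconnected.exists_adj_of_nontrivial htwin
end

section
/- For the path graph P_n with n ≥ 3 vertices, every derivation of the evolution algebra A(P_n) is zero. -/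
/-!
Write `a i j` for the `i`-th coordinate of `d eⱼ`. For `i ≠ j` we have `eᵢ eⱼ = 0`, so the
Leibniz rule gives `a j i • N j + a i j • N i = 0`, where `N i` is the indicator vector of the
neighbourhood of `i`; hence `a i j = 0` unless `i` and `j` are twins. Applying `d` to
`eᵢ eᵢ = ∑_{k ~ i} eₖ` then gives `a k k = 2 a i i` along every edge `ik`, so `3 a i i = 0`.
For `n ≥ 4` the path is twin-free. In `P₃` the two ends are twins and only satisfy
`a 0 2 + a 2 0 = 0`, and the same relations, solved by hand, still force `d = 0`.
-/

open Finset

/-- Multiplication of the evolution algebra `A(P_n)` of the path graph on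
vertices `0, …, n-1` (with `i` adjacent to `j` iff `|i - j| = 1`). -/
def mulPath (n : ℕ) (K : Type*) [Field K] (x y : Fin n → K) : Fin n → K :=
  fun k => ∑ i, x i * y i *
    (if i.val + 1 = k.val ∨ k.val + 1 = i.val then 1 else 0)

open SimpleGraph

theorem LinearMap.eq_zero_of_forall_apply_single_apply_eq_zero {V K : Type*} [Finite V]
    [DecidableEq V] [Semiring K] {d : (V → K) →ₗ[K] V → K} (h : ∀ i j, d (Pi.single j 1) i = 0) :
    d = 0 :=
  (Pi.basisFun K V).ext fun j => funext fun i => by simpa using h i j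

section EvolutionAlgebra

variable {V : Type*} [Fintype V] (G : SimpleGraph V) [DecidableRel G.Adj] (K : Type*) [Field K]

def evolutionMul (x y : V → K) : V → K :=
  fun k => ∑ i, x i * y i * if G.Adj i k then 1 else 0

def IsEvolutionDerivation_s17 (d : (V → K) →ₗ[K] V → K) : Prop :=
  ∀ x y, d (evolutionMul G K x y) = evolutionMul G K (d x) y + evolutionMul G K x (d y)

variable {G K}

theorem evolutionMul_comm (x y : V → K) : evolutionMul G K x y = evolutionMul G K y x := by
  unfold evolutionMul
  simp only [mul_comm (x _) (y _)]

variable [DecidableEq V]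

theorem evolutionMul_single_right_apply (x : V → K) (j k : V) :
    evolutionMul G K x (Pi.single j 1) k = if G.Adj j k then x j else 0 := by
  rw [evolutionMul, Finset.sum_eq_single j (fun i _ hij => by simp [hij]) (by simp)]
  simp

theorem evolutionMul_single_of_ne {i j : V} (hij : i ≠ j) :
    evolutionMul G K (Pi.single i 1) (Pi.single j 1) = 0 := by
  ext k
  simp [evolutionMul_single_right_apply, Pi.single_eq_of_ne' hij]

theorem evolutionMul_single_self (i : V) :
    evolutionMul G K (Pi.single i 1) (Pi.single i 1) =
      ∑ m ∈ G.neighborFinset i, Pi.single m 1 := by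
  ext k
  simp [evolutionMul_single_right_apply, Finset.sum_apply, Pi.single_apply]

namespace IsEvolutionDerivation_s17

variable {d : (V → K) →ₗ[K] V → K} (hd : IsEvolutionDerivation_s17 G K d)
include hd

theorem ite_adj_add_ite_adj_eq_zero {i j : V} (hij : i ≠ j) (k : V) :
    ((if G.Adj j k then d (Pi.single i 1) j else 0) +
      if G.Adj i k then d (Pi.single j 1) i else 0) = 0 := by
  have h := congrFun (hd (Pi.single i 1) (Pi.single j 1)) k
  rw [evolutionMul_single_of_ne hij, map_zero, Pi.add_apply, evolutionMul_comm (Pi.single i 1),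
    evolutionMul_single_right_apply, evolutionMul_single_right_apply] at h
  exact h.symm

theorem apply_single_eq_zero_of_adj_of_not_adj {i j k : V} (hij : i ≠ j) (hik : G.Adj i k)
    (hjk : ¬G.Adj j k) : d (Pi.single j 1) i = 0 := by
  simpa [hik, hjk] using hd.ite_adj_add_ite_adj_eq_zero hij k

theorem apply_single_eq_zero_of_neighborSet_ne {i j : V} (hij : i ≠ j)
    (hN : G.neighborSet i ≠ G.neighborSet j) (hi : ∃ k, G.Adj i k) :
    d (Pi.single j 1) i = 0 := by
  obtain ⟨k, hk⟩ : ∃ k, ¬(G.Adj i k ↔ G.Adj j k) := by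
    by_contra! h
    exact hN (Set.ext h)
  by_cases hik : G.Adj i k
  · exact hd.apply_single_eq_zero_of_adj_of_not_adj hij hik (by tauto)
  · have hji := hd.apply_single_eq_zero_of_adj_of_not_adj hij.symm (k := k) (by tauto) hik
    obtain ⟨k', hik'⟩ := hi
    simpa [hji, hik'] using hd.ite_adj_add_ite_adj_eq_zero hij k'

theorem sum_neighborFinset_apply (i k : V) :
    ∑ m ∈ G.neighborFinset i, d (Pi.single m 1) k =
      2 * if G.Adj i k then d (Pi.single i 1) i else 0 := by
  have h := congrFun (hd (Pi.single i 1) (Pi.single i 1)) k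
  rw [evolutionMul_single_self, map_sum, Pi.add_apply, evolutionMul_comm (Pi.single i 1),
    evolutionMul_single_right_apply, Finset.sum_apply] at h
  rw [h, two_mul]

theorem apply_single_self_eq_two_mul_of_adj (hoff : ∀ i j, i ≠ j → d (Pi.single j 1) i = 0)
    {i k : V} (hik : G.Adj i k) : d (Pi.single k 1) k = 2 * d (Pi.single i 1) i := by
  have h := hd.sum_neighborFinset_apply i k
  rwa [if_pos hik, Finset.sum_eq_single_of_mem k ((G.mem_neighborFinset i k).2 hik)
    fun m _ hmk => hoff k m (Ne.symm hmk)] at h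

theorem eq_zero_of_injective_neighborSet (h3 : (3 : K) ≠ 0) (hadj : ∀ i, ∃ k, G.Adj i k)
    (hinj : Function.Injective G.neighborSet) : d = 0 := by
  have hoff : ∀ i j, i ≠ j → d (Pi.single j 1) i = 0 := fun i j hij =>
    hd.apply_single_eq_zero_of_neighborSet_ne hij (hinj.ne hij) (hadj i)
  refine LinearMap.eq_zero_of_forall_apply_single_apply_eq_zero fun i j => ?_
  obtain rfl | hij := eq_or_ne i j
  · obtain ⟨k, hik⟩ := hadj i
    have h1 := hd.apply_single_self_eq_two_mul_of_adj hoff hik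
    have h2 := hd.apply_single_self_eq_two_mul_of_adj hoff hik.symm
    have h : 3 * d (Pi.single i 1) i = 0 := by linear_combination -h2 - 2 * h1
    exact (mul_eq_zero.1 h).resolve_left h3
  · exact hoff i j hij

end IsEvolutionDerivation_s17

end EvolutionAlgebra

instance (n : ℕ) : DecidableRel (pathGraph n).Adj :=
  fun _ _ => decidable_of_iff _ pathGraph_adj.symm

theorem mulPath_eq_evolutionMul (n : ℕ) (K : Type*) [Field K] :
    mulPath n K = evolutionMul (pathGraph n) K := by
  ext x y k
  simp only [mulPath, evolutionMul, pathGraph_adj]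

theorem pathGraph_exists_adj {n : ℕ} (hn : 2 ≤ n) (i : Fin n) : ∃ k, (pathGraph n).Adj i k := by
  by_cases h : i.val + 1 < n
  · exact ⟨⟨i.val + 1, h⟩, pathGraph_adj.2 (Or.inl rfl)⟩
  · exact ⟨⟨i.val - 1, by omega⟩, pathGraph_adj.2 (Or.inr (by simp; omega))⟩

theorem pathGraph_neighborSet_injective {n : ℕ} (hn : 4 ≤ n) :
    Function.Injective (pathGraph n).neighborSet := by
  intro i j hij
  have key : ∀ m (hm : m < n),
      (i.val + 1 = m ∨ m + 1 = i.val) ↔ (j.val + 1 = m ∨ m + 1 = j.val) :=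
    fun m hm => by simpa [pathGraph_adj] using Set.ext_iff.1 hij ⟨m, hm⟩
  have := key (i + 1)
  have := key (i - 1)
  have := key (j + 1)
  have := key (j - 1)
  ext
  omega

theorem IsEvolutionDerivation_s17.eq_zero_of_pathGraph_three {K : Type*} [Field K]
    {d : (Fin 3 → K) →ₗ[K] Fin 3 → K} (hd : IsEvolutionDerivation_s17 (pathGraph 3) K d)
    (h2 : (2 : K) ≠ 0) (h3 : (3 : K) ≠ 0) : d = 0 := by
  set a : Fin 3 → Fin 3 → K := fun i j => d (Pi.single j 1) i
  have hN0 : (pathGraph 3).neighborFinset 0 = {1} := by decide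
  have hN1 : (pathGraph 3).neighborFinset 1 = {0, 2} := by decide
  have hN2 : (pathGraph 3).neighborFinset 2 = {1} := by decide
  have h01 : a 0 1 = 0 :=
    hd.apply_single_eq_zero_of_adj_of_not_adj (k := 1) (by decide) (by decide) (by decide)
  have h10 : a 1 0 = 0 :=
    hd.apply_single_eq_zero_of_adj_of_not_adj (k := 0) (by decide) (by decide) (by decide)
  have h12 : a 1 2 = 0 :=
    hd.apply_single_eq_zero_of_adj_of_not_adj (k := 2) (by decide) (by decide) (by decide)
  have h21 : a 2 1 = 0 :=
    hd.apply_single_eq_zero_of_adj_of_not_adj (k := 1) (by decide) (by decide) (by decide)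
  have htwin : a 2 0 + a 0 2 = 0 := by
    simpa [pathGraph_adj] using hd.ite_adj_add_ite_adj_eq_zero (i := 0) (j := 2) (by decide) 1
  have s10 : a 0 0 + a 0 2 = 2 * a 1 1 := by
    simpa [hN1, pathGraph_adj] using hd.sum_neighborFinset_apply 1 0
  have s12 : a 2 0 + a 2 2 = 2 * a 1 1 := by
    simpa [hN1, pathGraph_adj] using hd.sum_neighborFinset_apply 1 2
  have s01 : a 1 1 = 2 * a 0 0 := by
    simpa [hN0, pathGraph_adj] using hd.sum_neighborFinset_apply 0 1
  have s21 : a 1 1 = 2 * a 2 2 := by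
    simpa [hN2, pathGraph_adj] using hd.sum_neighborFinset_apply 2 1
  have h11 : a 1 1 = 0 := by
    have h : (2 * 3 : K) * a 1 1 = 0 := by
      linear_combination -(2 * s10 + 2 * s12 - 2 * htwin + s01 + s21)
    simpa [h2, h3] using h
  have h00 : a 0 0 = 0 := by simpa [h11, h2] using s01
  have h22 : a 2 2 = 0 := by simpa [h11, h2] using s21
  have h02 : a 0 2 = 0 := by linear_combination s10 - h00 + 2 * h11
  have h20 : a 2 0 = 0 := by linear_combination htwin - h02
  refine LinearMap.eq_zero_of_forall_apply_single_apply_eq_zero fun i j => ?_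
  fin_cases i <;> fin_cases j <;> assumption

/-- Every derivation of the evolution algebra of the path graph `P_n`,
`n ≥ 3`, is zero. -/
theorem der_path_eq_zero {n : ℕ} (hn : 3 ≤ n) {K : Type*} [Field K] [CharZero K]
    (d : (Fin n → K) →ₗ[K] (Fin n → K))
    (hd : ∀ x y : Fin n → K,
      d (mulPath n K x y) = mulPath n K (d x) y + mulPath n K x (d y)) :
    d = 0 := by
  have hder : IsEvolutionDerivation_s17 (pathGraph n) K d := by
    simpa only [IsEvolutionDerivation_s17, mulPath_eq_evolutionMul] using hd
  obtain rfl | hn := hn.eq_or_lt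
  · exact hder.eq_zero_of_pathGraph_three two_ne_zero three_ne_zero
  · exact hder.eq_zero_of_injective_neighborSet three_ne_zero (pathGraph_exists_adj (by omega))
      (pathGraph_neighborSet_injective hn)
end
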